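/- Computing an extraction order of minimum extraction width for a given directed graph is NP-hard. Specifically, the vertex cover problem on connected undirected graphs reduces in polynomial time to the problem of finding an extraction order of minimum width. -/

import Mathlib

/-!
Lower bound. Let `X` be an extraction order of the reduction graph. If every spoke to the wheel
leaves the hub `none`, each triangle `none, wheel j, wheel (j + 1)` is a confluence whose target,
`wheel j` or `wheel (j + 1)`, labels both of its spokes; so these spokes form a single bag, whose
labels meet every pair of consecutive wheel vertices, hence number at least `|V| + 1`. Otherwise
some spoke enters the hub, the root must then lie on the wheel, and every path from the root into
`G` passes through the hub; acyclicity forces all spokes `none → ι v` out of the hub. Triangles over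
the edges of `G` then chain these spokes into a single bag (`G` is connected) whose labels contain
the heads of all oriented edges of `G`, which form a vertex cover.

Upper bound. Given a minimum vertex cover `S`, orient every edge along a rank under which the wheel
is a path from `wheel 0` ending in the hub and every edge of `G` points into `S`. Only the hub and
the vertices of `S` are then targets of confluences: bags on the wheel carry only the label `none`,
all other bags only labels from `S`.
-/

/-- The list of consecutive edges traversed by a path given as a list of vertices. -/
def pathEdges {V : Type*} (p : List V) : List (V × V) := p.zip p.tail

/-- A (simple) directed path from `a` to `b` in the edge set `E`, given as the
nonempty list of visited vertices. -/
def IsPath {V : Type*} (E : Finset (V × V)) (a b : V) (p : List V) : Prop :=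
  p ≠ [] ∧ p.head? = some a ∧ p.getLast? = some b ∧ p.Nodup ∧
    ∀ e ∈ pathEdges p, e ∈ E

/-- An extraction order: a rooted DAG in which every vertex is reachable from the root. -/
structure ExtractionOrder (V : Type*) where
  E : Finset (V × V)
  root : V
  reach : ∀ v : V, ∃ p : List V, IsPath E root v p
  acyclic : ∀ u v : V, (u, v) ∈ E → ¬ ∃ p : List V, IsPath E v u p

/-- A confluence from `i` to `j`: two distinct directed paths from `i` to `j`
that are vertex-disjoint except at their shared endpoints. -/
def IsConfluence {V : Type*} (E : Finset (V × V)) (i j : V) (p₁ p₂ : List V) : Prop :=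
  i ≠ j ∧ p₁ ≠ p₂ ∧ IsPath E i j p₁ ∧ IsPath E i j p₂ ∧
    ∀ v, v ∈ p₁ → v ∈ p₂ → v = i ∨ v = j

/-- The edge `e` is labeled with `j` iff some confluence with target `j` contains `e`. -/
def IsLabeled {V : Type*} (E : Finset (V × V)) (e : V × V) (j : V) : Prop :=
  ∃ i p₁ p₂, IsConfluence E i j p₁ p₂ ∧ (e ∈ pathEdges p₁ ∨ e ∈ pathEdges p₂)

/-- The edge `e` lies on some directed path from `i` to `j`. -/
def OnPath {V : Type*} (E : Finset (V × V)) (i j : V) (e : V × V) : Prop :=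
  ∃ p, IsPath E i j p ∧ e ∈ pathEdges p

/-- The label set of an edge. -/
def labelSet {V : Type*} (E : Finset (V × V)) (e : V × V) : Set V :=
  {j | IsLabeled E e j}

/-- Two edges lie in the same edge bag (of the common tail `e.1`) iff they are linked by a
chain of outgoing edges of `e.1` with pairwise intersecting label sets. -/
def inSameBag {V : Type*} (E : Finset (V × V)) (e e' : V × V) : Prop :=
  Relation.ReflTransGen
    (fun a b => a ∈ E ∧ b ∈ E ∧ a.1 = e.1 ∧ b.1 = e.1 ∧
      (labelSet E a ∩ labelSet E b).Nonempty) e e'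

/-- The union of the label sets of the edges in the bag of `e`. -/
def bagLabels {V : Type*} (E : Finset (V × V)) (e : V × V) : Set V :=
  {j | ∃ e', inSameBag E e e' ∧ IsLabeled E e' j}

/-- The width of an extraction order: one plus the maximal number of labels in any edge bag. -/
noncomputable def widthX {V : Type*} (X : ExtractionOrder V) : ℕ :=
  1 + X.E.sup (fun e => (bagLabels X.E e).ncard)

/-- `EX` is obtained from `E` by possibly reversing the orientation of some edges. -/
def IsOrientationOf {V : Type*} (EX E : Finset (V × V)) : Prop :=
  (∀ u v : V, (u, v) ∈ EX → (u, v) ∈ E ∨ (v, u) ∈ E) ∧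
  (∀ u v : V, (u, v) ∈ E → (u, v) ∈ EX ∨ (v, u) ∈ EX)

/-- The extraction width of a directed graph: the minimum width over all its extraction orders. -/
noncomputable def extractionWidth {V : Type*} (E : Finset (V × V)) : ℕ :=
  sInf {w | ∃ X : ExtractionOrder V, IsOrientationOf X.E E ∧ widthX X = w}

/-- The underlying undirected simple graph of a directed edge set. -/
def underlying {V : Type*} (E : Finset (V × V)) : SimpleGraph V where
  Adj u v := u ≠ v ∧ ((u, v) ∈ E ∨ (v, u) ∈ E)
  symm := by constructor; intro u v h; exact ⟨h.1.symm, h.2.elim Or.inr Or.inl⟩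
  loopless := by constructor; intro u h; exact h.1 rfl

/-- A vertex cover of an undirected graph. -/
def IsVertexCover {V : Type*} (G : SimpleGraph V) (S : Finset V) : Prop :=
  ∀ u v : V, G.Adj u v → u ∈ S ∨ v ∈ S

/-- The size of a minimum vertex cover. -/
noncomputable def minVertexCover {V : Type*} (G : SimpleGraph V) : ℕ :=
  sInf {k | ∃ S : Finset V, IsVertexCover G S ∧ S.card = k}

/-- The graph of the vertex-cover reduction: the vertices of `G` together with a half
wheel on `2·|V| + 2` outer vertices whose center `none` also plays the role of the
super root `r̂`; the center is joined to every original vertex and to every outer wheel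
vertex, consecutive outer wheel vertices are joined, and each edge of `G` is oriented
by the linear order. -/
def reductionGraph {V : Type*} [Fintype V] [LinearOrder V]
    (G : SimpleGraph V) [DecidableRel G.Adj] :
    Finset (Option (V ⊕ Fin (2 * Fintype.card V + 2)) ×
            Option (V ⊕ Fin (2 * Fintype.card V + 2))) :=
  (((Finset.univ : Finset (V × V)).filter
      (fun p => p.1 < p.2 ∧ G.Adj p.1 p.2)).image
        (fun p => (some (Sum.inl p.1), some (Sum.inl p.2)))) ∪
  (Finset.univ.image fun i : V =>
      ((none : Option (V ⊕ Fin (2 * Fintype.card V + 2))), some (Sum.inl i))) ∪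
  (Finset.univ.image fun k : Fin (2 * Fintype.card V + 2) =>
      ((none : Option (V ⊕ Fin (2 * Fintype.card V + 2))), some (Sum.inr k))) ∪
  (((Finset.univ : Finset (Fin (2 * Fintype.card V + 2) × Fin (2 * Fintype.card V + 2))).filter
      (fun p => (p.2 : ℕ) = (p.1 : ℕ) + 1)).image
        (fun p => (some (Sum.inr p.1), some (Sum.inr p.2))))

theorem mem_pathEdges_iff {V : Type*} {p : List V} {e : V × V} :
    e ∈ pathEdges p ↔ ∃ i, ∃ h : i + 1 < p.length, p[i] = e.1 ∧ p[i + 1] = e.2 := by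
  simp only [pathEdges, List.mem_iff_getElem, List.length_zip, List.length_tail,
    List.getElem_zip, List.getElem_tail]
  constructor
  · rintro ⟨i, hi, rfl⟩
    exact ⟨i, by omega, rfl, rfl⟩
  · rintro ⟨i, hi, h₁, h₂⟩
    exact ⟨i, by omega, Prod.ext h₁ h₂⟩

theorem mem_of_mem_pathEdges {V : Type*} {p : List V} {e : V × V} (he : e ∈ pathEdges p) :
    e.1 ∈ p ∧ e.2 ∈ p := by
  obtain ⟨i, hi, h₁, h₂⟩ := mem_pathEdges_iff.mp he
  exact ⟨h₁ ▸ List.getElem_mem _, h₂ ▸ List.getElem_mem _⟩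

namespace IsPath

variable {V : Type*} {E : Finset (V × V)} {a b : V} {p : List V}

theorem length_pos (hp : IsPath E a b p) : 0 < p.length :=
  List.length_pos_iff.mpr hp.1

theorem getElem_zero (hp : IsPath E a b p) : p[0]'hp.length_pos = a := by
  obtain ⟨-, ha, -⟩ := hp
  rwa [List.head?_eq_getElem?, List.getElem?_eq_getElem, Option.some_inj] at ha

theorem getElem_length_sub_one (hp : IsPath E a b p) :
    p[p.length - 1]'(by have := hp.length_pos; omega) = b := by
  obtain ⟨-, -, hb, -⟩ := hp
  rwa [List.getLast?_eq_getElem?, List.getElem?_eq_getElem, Option.some_inj] at hb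

theorem edge (hp : IsPath E a b p) {i : ℕ} (h : i + 1 < p.length) : (p[i], p[i + 1]) ∈ E :=
  hp.2.2.2.2 _ (mem_pathEdges_iff.mpr ⟨i, h, rfl, rfl⟩)

theorem drop (hp : IsPath E a b p) {i : ℕ} (hi : i < p.length) :
    IsPath E p[i] b (p.drop i) := by
  have hne : p.drop i ≠ [] := by rw [Ne, List.drop_eq_nil_iff]; omega
  refine ⟨hne, by simp, ?_, hp.2.2.2.1.sublist (List.drop_sublist i p), fun e he ↦ ?_⟩
  · rw [List.getLast?_drop, if_neg (by omega), hp.2.2.1]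
  · obtain ⟨k, hk, h₁, h₂⟩ := mem_pathEdges_iff.mp he
    simp only [List.getElem_drop, List.length_drop] at h₁ h₂ hk
    refine hp.2.2.2.2 _ (mem_pathEdges_iff.mpr ⟨i + k, by omega, h₁, ?_⟩)
    simp only [← h₂, Nat.add_assoc]

theorem forall_mem_of_succClosed {Q : V → Prop} (hQ : ∀ x y, (x, y) ∈ E → Q x → Q y)
    (hp : IsPath E a b p) (ha : Q a) : ∀ x ∈ p, Q x := by
  have key : ∀ i (h : i < p.length), Q p[i] := by
    intro i
    induction i with
    | zero => intro h; rwa [hp.getElem_zero]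
    | succ i ih => intro h; exact hQ _ _ (hp.edge h) (ih (by omega))
  intro x hx
  obtain ⟨i, hi, rfl⟩ := List.mem_iff_getElem.mp hx
  exact key i hi

theorem forall_mem_of_predClosed {P : V → Prop} (hP : ∀ x y, (x, y) ∈ E → P y → P x)
    (hp : IsPath E a b p) (hb : P b) : ∀ x ∈ p, P x := by
  intro x hx
  obtain ⟨i, hi, rfl⟩ := List.mem_iff_getElem.mp hx
  by_contra hx
  exact (hp.drop hi).forall_mem_of_succClosed (Q := fun y ↦ ¬P y)
    (fun x y hxy hx hy ↦ hx (hP x y hxy hy)) hx b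
    (List.mem_of_getLast? (hp.drop hi).2.2.1) hb

theorem rank_le {α : Type*} [Preorder α] {f : V → α} (hf : ∀ x y, (x, y) ∈ E → f x < f y)
    (hp : IsPath E a b p) : f a ≤ f b :=
  hp.forall_mem_of_succClosed (Q := fun x ↦ f a ≤ f x)
    (fun x y hxy hx ↦ hx.trans (hf x y hxy).le) le_rfl b (List.mem_of_getLast? hp.2.2.1)

theorem exists_crossing {P : V → Prop} (hp : IsPath E a b p) (ha : ¬P a) (hb : P b) :
    ∃ i, ∃ h : i + 1 < p.length, ¬P p[i] ∧ P p[i + 1] := by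
  have key : ∀ i (h : i < p.length), P p[i] →
      ∃ j, ∃ h : j + 1 < p.length, ¬P p[j] ∧ P p[j + 1] := by
    intro i
    induction i with
    | zero => intro h hP; rw [hp.getElem_zero] at hP; exact absurd hP ha
    | succ i ih =>
      intro h hP
      by_cases hPi : P p[i]
      · exact ih (by omega) hPi
      · exact ⟨i, h, hPi, hP⟩
  exact key _ _ (by rwa [hp.getElem_length_sub_one])

theorem exists_path_of_gate {P : V → Prop} {g : V}
    (hgate : ∀ x y, (x, y) ∈ E → ¬P x → P y → x = g)
    (hp : IsPath E a b p) (ha : ¬P a) (hb : P b) : g ∈ p ∧ ∃ q, IsPath E g b q := by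
  obtain ⟨i, hi, hPi, hPi'⟩ := hp.exists_crossing ha hb
  have hg : p[i] = g := hgate _ _ (hp.edge hi) hPi hPi'
  exact ⟨hg ▸ List.getElem_mem _, _, hg ▸ hp.drop (by omega)⟩

theorem two_le_length (hp : IsPath E a b p) (hab : a ≠ b) : 2 ≤ p.length := by
  by_contra h
  have h1 : p.length = 1 := by have := hp.length_pos; omega
  have := hp.getElem_length_sub_one
  simp only [h1, Nat.sub_self] at this
  exact hab (hp.getElem_zero.symm.trans this)

theorem last_edge (hp : IsPath E a b p) (hab : a ≠ b) :
    (p[p.length - 2]'(by have := hp.two_le_length hab; omega), b) ∈ E := by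
  have h2 := hp.two_le_length hab
  have := hp.edge (i := p.length - 2) (by omega)
  simp only [show p.length - 2 + 1 = p.length - 1 by omega, hp.getElem_length_sub_one] at this
  exact this

theorem penultimate_ne (hp : IsPath E a b p) (hab : a ≠ b) :
    p[p.length - 2]'(by have := hp.two_le_length hab; omega) ≠ b := by
  intro h
  have := (hp.2.2.2.1.getElem_inj_iff (i := p.length - 2) (j := p.length - 1)).mp
    (h.trans hp.getElem_length_sub_one.symm)
  have := hp.two_le_length hab
  omega

theorem eq_pair_of_penultimate_eq (hp : IsPath E a b p) (hab : a ≠ b)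
    (h : p[p.length - 2]'(by have := hp.two_le_length hab; omega) = a) : p = [a, b] := by
  have h2 := hp.two_le_length hab
  have hlen : p.length = 2 := by
    have := (hp.2.2.2.1.getElem_inj_iff (i := p.length - 2) (j := 0)).mp
      (h.trans hp.getElem_zero.symm)
    omega
  obtain ⟨x, y, rfl⟩ := List.length_eq_two.mp hlen
  have hx := hp.getElem_zero
  have hy := hp.getElem_length_sub_one
  simp only [List.length_cons, List.length_nil] at hy
  simp_all

end IsPath

section Paths

variable {V : Type*} {E : Finset (V × V)}

theorem isPath_pair {a b : V} (hab : a ≠ b) (h : (a, b) ∈ E) : IsPath E a b [a, b] :=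
  ⟨by simp, by simp, by simp, by simp [hab], by simpa [pathEdges] using h⟩

theorem isPath_triple {a b c : V} (hab : a ≠ b) (hbc : b ≠ c) (hac : a ≠ c)
    (h₁ : (a, b) ∈ E) (h₂ : (b, c) ∈ E) : IsPath E a c [a, b, c] :=
  ⟨by simp, by simp, by simp, by simp [hab, hbc, hac], by simp [pathEdges, h₁, h₂]⟩

theorem acyclic_of_rank {α : Type*} [Preorder α] {f : V → α}
    (hf : ∀ x y, (x, y) ∈ E → f x < f y) :
    ∀ u v : V, (u, v) ∈ E → ¬ ∃ p : List V, IsPath E v u p := by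
  rintro u v huv ⟨p, hp⟩
  exact lt_irrefl _ ((hf u v huv).trans_le (hp.rank_le hf))

theorem ExtractionOrder.ne_of_mem (X : ExtractionOrder V) {u v : V} (h : (u, v) ∈ X.E) :
    u ≠ v := by
  rintro rfl
  exact X.acyclic u u h ⟨[u], by simp, by simp, by simp, by simp, by simp [pathEdges]⟩

end Paths

section Labels

variable {V : Type*} {E : Finset (V × V)}

theorem IsConfluence.symm {i j : V} {p₁ p₂ : List V} (hc : IsConfluence E i j p₁ p₂) :
    IsConfluence E i j p₂ p₁ :=
  ⟨hc.1, hc.2.1.symm, hc.2.2.2.1, hc.2.2.1, fun v h₂ h₁ ↦ hc.2.2.2.2 v h₁ h₂⟩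

theorem IsConfluence.exists_two_inedges {i j : V} {p₁ p₂ : List V}
    (hc : IsConfluence E i j p₁ p₂) : ∃ x₁ x₂, x₁ ≠ x₂ ∧ (x₁, j) ∈ E ∧ (x₂, j) ∈ E := by
  obtain ⟨hij, hne, hp₁, hp₂, hdisj⟩ := hc
  refine ⟨_, _, fun hx ↦ ?_, hp₁.last_edge hij, hp₂.last_edge hij⟩
  have hmem₁ := List.getElem_mem (l := p₁) (n := p₁.length - 2)
    (by have := hp₁.two_le_length hij; omega)
  have hmem₂ := List.getElem_mem (l := p₂) (n := p₂.length - 2)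
    (by have := hp₂.two_le_length hij; omega)
  rw [← hx] at hmem₂
  rcases hdisj _ hmem₁ hmem₂ with h | h
  · exact hne ((hp₁.eq_pair_of_penultimate_eq hij h).trans
      (hp₂.eq_pair_of_penultimate_eq hij (hx ▸ h)).symm)
  · exact hp₁.penultimate_ne hij h

theorem IsLabeled.exists_left {e : V × V} {j : V} (h : IsLabeled E e j) :
    ∃ i p₁ p₂, IsConfluence E i j p₁ p₂ ∧ e ∈ pathEdges p₁ := by
  obtain ⟨i, p₁, p₂, hc, he | he⟩ := h
  · exact ⟨i, p₁, p₂, hc, he⟩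
  · exact ⟨i, p₂, p₁, hc.symm, he⟩

theorem isLabeled_of_triangle {i u w : V} (hiu : i ≠ u) (huw : u ≠ w) (hiw : i ≠ w)
    (h₁ : (i, u) ∈ E) (h₂ : (u, w) ∈ E) (h₃ : (i, w) ∈ E) :
    IsLabeled E (i, u) w ∧ IsLabeled E (i, w) w := by
  have hc : IsConfluence E i w [i, u, w] [i, w] :=
    ⟨hiw, by simp, isPath_triple hiu huw hiw h₁ h₂, isPath_pair hiw h₃,
      fun v _ hv ↦ by simpa using hv⟩
  exact ⟨⟨i, _, _, hc, .inl (by simp [pathEdges])⟩, ⟨i, _, _, hc, .inr (by simp [pathEdges])⟩⟩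

theorem exists_common_label_of_triangle {i u w : V} (hiu : i ≠ u) (huw : u ≠ w) (hiw : i ≠ w)
    (hu : (i, u) ∈ E) (hw : (i, w) ∈ E) (huw' : (u, w) ∈ E ∨ (w, u) ∈ E) :
    ∃ t, (t = u ∨ t = w) ∧ IsLabeled E (i, u) t ∧ IsLabeled E (i, w) t := by
  rcases huw' with h | h
  · obtain ⟨h₁, h₂⟩ := isLabeled_of_triangle hiu huw hiw hu h hw
    exact ⟨w, .inr rfl, h₁, h₂⟩
  · obtain ⟨h₁, h₂⟩ := isLabeled_of_triangle hiw huw.symm hiu hw h hu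
    exact ⟨u, .inl rfl, h₂, h₁⟩

theorem inSameBag.fst_eq {e e' : V × V} (h : inSameBag E e e') : e'.1 = e.1 := by
  induction h with
  | refl => rfl
  | tail _ hstep _ => exact hstep.2.2.2.1

theorem inSameBag_of_reachable {α : Type*} {H : SimpleGraph α} {x : V} {f : α → V}
    (hE : ∀ a, (x, f a) ∈ E)
    (hlab : ∀ a b, H.Adj a b → (labelSet E (x, f a) ∩ labelSet E (x, f b)).Nonempty)
    {a b : α} (hab : H.Reachable a b) : inSameBag E (x, f a) (x, f b) := by
  obtain ⟨w⟩ := hab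
  induction w with
  | nil => exact .refl
  | @cons a c _ hadj _ ih =>
    have step : (fun e e' ↦ e ∈ E ∧ e' ∈ E ∧ e.1 = x ∧ e'.1 = x ∧
        (labelSet E e ∩ labelSet E e').Nonempty) (x, f a) (x, f c) :=
      ⟨hE a, hE c, rfl, rfl, hlab a c hadj⟩
    exact .head step ih

theorem ncard_bagLabels_lt_widthX (X : ExtractionOrder V) {e : V × V} (he : e ∈ X.E) :
    (bagLabels X.E e).ncard < widthX X := by
  have := Finset.le_sup (f := fun e ↦ (bagLabels X.E e).ncard) he
  unfold widthX
  omega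

theorem extractionWidth_eq {X : ExtractionOrder V} (hX : IsOrientationOf X.E E)
    (hmin : ∀ Y : ExtractionOrder V, IsOrientationOf Y.E E → widthX X ≤ widthX Y) :
    extractionWidth E = widthX X :=
  IsLeast.csInf_eq ⟨⟨X, hX, rfl⟩, by rintro _ ⟨Y, hY, rfl⟩; exact hmin Y hY⟩

end Labels

section VertexCover

variable {V : Type*} {G : SimpleGraph V}

theorem minVertexCover_le_card {S : Finset V} (hS : IsVertexCover G S) :
    minVertexCover G ≤ S.card :=
  Nat.sInf_le ⟨S, hS, rfl⟩

variable [Fintype V]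

theorem isVertexCover_univ : IsVertexCover G Finset.univ :=
  fun u _ _ ↦ .inl (Finset.mem_univ u)

theorem minVertexCover_le_card_univ : minVertexCover G ≤ Fintype.card V :=
  minVertexCover_le_card isVertexCover_univ

theorem exists_isVertexCover_card_eq : ∃ S, IsVertexCover G S ∧ S.card = minVertexCover G :=
  Nat.sInf_mem (s := {k | ∃ S : Finset V, IsVertexCover G S ∧ S.card = k})
    ⟨_, Finset.univ, isVertexCover_univ, rfl⟩

end VertexCover

theorem le_card_of_hits_consecutive {n : ℕ} {L : Finset (Fin (2 * n + 2))}
    (hL : ∀ j k : Fin (2 * n + 2), (k : ℕ) = j + 1 → j ∈ L ∨ k ∈ L) : n + 1 ≤ L.card := by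
  have hsub : Finset.range (n + 1) ⊆ L.image (fun k : Fin (2 * n + 2) ↦ (k : ℕ) / 2) := by
    intro m hm
    rw [Finset.mem_range] at hm
    rcases hL ⟨2 * m, by omega⟩ ⟨2 * m + 1, by omega⟩ rfl with h | h
    · exact Finset.mem_image.mpr ⟨_, h, by simp⟩
    · exact Finset.mem_image.mpr ⟨_, h, show (2 * m + 1) / 2 = m by omega⟩
  simpa using (Finset.card_le_card hsub).trans Finset.card_image_le

namespace ReductionGraph

abbrev Vertex (V : Type*) [Fintype V] := Option (V ⊕ Fin (2 * Fintype.card V + 2))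

variable {V : Type*} [Fintype V]

def ι (v : V) : Vertex V := some (Sum.inl v)

def wheel (k : Fin (2 * Fintype.card V + 2)) : Vertex V := some (Sum.inr k)

theorem ι_injective : Function.Injective (ι (V := V)) := by
  intro a b h; simpa [ι] using h

theorem wheel_injective : Function.Injective (wheel (V := V)) := by
  intro a b h; simpa [wheel] using h

@[simp] theorem ι_ne_none (v : V) : ι v ≠ none := by simp [ι]
@[simp] theorem wheel_ne_none (k : Fin _) : wheel (V := V) k ≠ none := by simp [wheel]
@[simp] theorem ι_ne_wheel (v : V) (k : Fin _) : ι v ≠ wheel k := by simp [ι, wheel]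
@[simp] theorem wheel_ne_ι (v : V) (k : Fin _) : wheel k ≠ ι v := (ι_ne_wheel v k).symm
@[simp] theorem none_ne_ι (v : V) : none ≠ ι v := (ι_ne_none v).symm
@[simp] theorem none_ne_wheel (k : Fin _) : none ≠ wheel (V := V) k := (wheel_ne_none k).symm
@[simp] theorem ι_inj {u v : V} : ι u = ι v ↔ u = v := ι_injective.eq_iff
@[simp] theorem wheel_inj {j k : Fin _} : wheel (V := V) j = wheel k ↔ j = k :=
  wheel_injective.eq_iff

theorem wheel_notMem_range_ι (k : Fin _) : wheel (V := V) k ∉ Set.range ι := by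
  rintro ⟨v, h⟩; exact ι_ne_wheel v k h

variable [LinearOrder V] {G : SimpleGraph V} [DecidableRel G.Adj]

theorem mem_reductionGraph {x y : Vertex V} :
    (x, y) ∈ reductionGraph G ↔
      (∃ u v, u < v ∧ G.Adj u v ∧ x = ι u ∧ y = ι v) ∨
      (∃ v, x = none ∧ y = ι v) ∨
      (∃ k, x = none ∧ y = wheel k) ∨
      (∃ j k : Fin _, (k : ℕ) = j + 1 ∧ x = wheel j ∧ y = wheel k) := by
  simp only [reductionGraph, Finset.mem_union, Finset.mem_image, Finset.mem_filter,
    Finset.mem_univ, true_and, Prod.ext_iff, ι, wheel, Prod.exists]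
  aesop

theorem none_ι_mem (v : V) : (none, ι v) ∈ reductionGraph G :=
  mem_reductionGraph.mpr (.inr (.inl ⟨v, rfl, rfl⟩))

theorem none_wheel_mem (k : Fin _) : (none, wheel k) ∈ reductionGraph G :=
  mem_reductionGraph.mpr (.inr (.inr (.inl ⟨k, rfl, rfl⟩)))

theorem wheel_wheel_mem {j k : Fin (2 * Fintype.card V + 2)} (h : (k : ℕ) = j + 1) :
    (wheel j, wheel k) ∈ reductionGraph G :=
  mem_reductionGraph.mpr (.inr (.inr (.inr ⟨j, k, h, rfl, rfl⟩)))

theorem ι_ι_mem_reductionGraph_or {u v : V} (h : G.Adj u v) :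
    (ι u, ι v) ∈ reductionGraph G ∨ (ι v, ι u) ∈ reductionGraph G := by
  rcases h.ne.lt_or_gt with huv | hvu
  · exact .inl (mem_reductionGraph.mpr (.inl ⟨u, v, huv, h, rfl, rfl⟩))
  · exact .inr (mem_reductionGraph.mpr (.inl ⟨v, u, hvu, h.symm, rfl, rfl⟩))

section Orientation

variable {EX : Finset (Vertex V × Vertex V)} (hX : IsOrientationOf EX (reductionGraph G))
include hX

theorem eq_none_of_enter_range_ι (x y : Vertex V) (h : (x, y) ∈ EX)
    (hx : x ∉ Set.range ι) (hy : y ∈ Set.range ι) : x = none := by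
  obtain ⟨v, rfl⟩ := hy
  rcases hX.1 _ _ h with h | h <;> rw [mem_reductionGraph] at h <;> aesop

theorem eq_none_of_enter_range_wheel (x y : Vertex V) (h : (x, y) ∈ EX)
    (hx : x ∉ Set.range wheel) (hy : y ∈ Set.range wheel) : x = none := by
  obtain ⟨k, rfl⟩ := hy
  rcases hX.1 _ _ h with h | h <;> rw [mem_reductionGraph] at h <;> aesop

theorem ι_ι_mem_or {u v : V} (h : G.Adj u v) : (ι u, ι v) ∈ EX ∨ (ι v, ι u) ∈ EX := by
  rcases ι_ι_mem_reductionGraph_or h with h | h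
  · exact hX.2 _ _ h
  · exact (hX.2 _ _ h).symm

end Orientation

section LowerBound

variable {X : ExtractionOrder (Vertex V)} (hX : IsOrientationOf X.E (reductionGraph G))
include hX

theorem card_lt_widthX_of_forall_none_wheel_mem (hall : ∀ k, (none, wheel k) ∈ X.E) :
    Fintype.card V + 1 < widthX X := by
  classical
  have hcommon : ∀ j k : Fin (2 * Fintype.card V + 2), (k : ℕ) = j + 1 →
      ∃ t, (t = wheel j ∨ t = wheel k) ∧ IsLabeled X.E (none, wheel j) t ∧
        IsLabeled X.E (none, wheel k) t := fun j k hjk ↦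
    exists_common_label_of_triangle (by simp) (by rw [Ne, wheel_inj, Fin.ext_iff]; omega)
      (by simp) (hall j) (hall k) (hX.2 _ _ (wheel_wheel_mem hjk))
  have hbag : ∀ k, inSameBag X.E (none, wheel 0) (none, wheel k) := fun k ↦
    inSameBag_of_reachable (H := SimpleGraph.pathGraph _) hall
      (fun j k hjk ↦ by
        rcases SimpleGraph.pathGraph_adj.mp hjk with h | h
        · obtain ⟨t, -, h₁, h₂⟩ := hcommon j k h.symm
          exact ⟨t, h₁, h₂⟩
        · obtain ⟨t, -, h₁, h₂⟩ := hcommon k j h.symm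
          exact ⟨t, h₂, h₁⟩)
      (SimpleGraph.pathGraph_preconnected _ 0 k)
  set L := Finset.univ.filter fun k ↦ wheel k ∈ bagLabels X.E (none, wheel 0)
  have hL : Fintype.card V + 1 ≤ L.card := le_card_of_hits_consecutive fun j k hjk ↦ by
    obtain ⟨t, ht, h₁, h₂⟩ := hcommon j k hjk
    rcases ht with rfl | rfl
    · exact .inl (Finset.mem_filter.mpr ⟨Finset.mem_univ _, _, hbag j, h₁⟩)
    · exact .inr (Finset.mem_filter.mpr ⟨Finset.mem_univ _, _, hbag k, h₂⟩)
  calc Fintype.card V + 1 ≤ L.card := hL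
    _ ≤ (bagLabels X.E (none, wheel 0)).ncard := by
      rw [← Set.ncard_coe_finset]
      exact Set.ncard_le_ncard_of_injOn wheel (fun k hk ↦ (Finset.mem_filter.mp hk).2)
        wheel_injective.injOn (Set.toFinite _)
    _ < widthX X := ncard_bagLabels_lt_widthX X (hall 0)

theorem forall_none_ι_mem_of_wheel_none_mem {k₀ : Fin (2 * Fintype.card V + 2)}
    (hk₀ : (wheel k₀, none) ∈ X.E) (v : V) : (none, ι v) ∈ X.E := by
  have hroot : X.root ∈ Set.range wheel := by
    by_contra hr
    obtain ⟨p, hp⟩ := X.reach (wheel k₀)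
    exact X.acyclic _ _ hk₀
      (hp.exists_path_of_gate (eq_none_of_enter_range_wheel hX) hr ⟨k₀, rfl⟩).2
  refine (hX.2 _ _ (none_ι_mem v)).resolve_right fun hv ↦ ?_
  obtain ⟨p, hp⟩ := X.reach (ι v)
  obtain ⟨k, hk⟩ := hroot
  exact X.acyclic _ _ hv (hp.exists_path_of_gate (eq_none_of_enter_range_ι hX)
    (hk ▸ wheel_notMem_range_ι k) ⟨v, rfl⟩).2

theorem minVertexCover_lt_widthX_of_forall_none_ι_mem (hconn : G.Connected)
    (hspoke : ∀ v, (none, ι v) ∈ X.E) : minVertexCover G < widthX X := by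
  obtain ⟨v₀⟩ := hconn.nonempty
  have hbag : ∀ v, inSameBag X.E (none, ι v₀) (none, ι v) := fun v ↦
    inSameBag_of_reachable (H := G) hspoke
      (fun u w huw ↦ by
        obtain ⟨t, -, h₁, h₂⟩ := exists_common_label_of_triangle (by simp)
          (by simpa using huw.ne) (by simp) (hspoke u) (hspoke w) (ι_ι_mem_or hX huw)
        exact ⟨t, h₁, h₂⟩)
      (hconn.preconnected v₀ v)
  set H := Finset.univ.filter fun v ↦ ∃ u, (ι u, ι v) ∈ X.E
  have hcover : IsVertexCover G H := fun u v huv ↦ by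
    rcases ι_ι_mem_or hX huv with h | h
    · exact .inr (Finset.mem_filter.mpr ⟨Finset.mem_univ _, u, h⟩)
    · exact .inl (Finset.mem_filter.mpr ⟨Finset.mem_univ _, v, h⟩)
  have hlabels : ∀ v ∈ H, ι v ∈ bagLabels X.E (none, ι v₀) := by
    intro v hv
    obtain ⟨u, hu⟩ := (Finset.mem_filter.mp hv).2
    exact ⟨_, hbag v, (isLabeled_of_triangle (by simp) (X.ne_of_mem hu) (by simp)
      (hspoke u) hu (hspoke v)).2⟩
  calc minVertexCover G ≤ H.card := minVertexCover_le_card hcover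
    _ ≤ (bagLabels X.E (none, ι v₀)).ncard := by
      rw [← Set.ncard_coe_finset]
      exact Set.ncard_le_ncard_of_injOn ι hlabels ι_injective.injOn (Set.toFinite _)
    _ < widthX X := ncard_bagLabels_lt_widthX X (hspoke v₀)

theorem minVertexCover_lt_widthX (hconn : G.Connected) : minVertexCover G < widthX X := by
  by_cases hall : ∀ k, (none, wheel k) ∈ X.E
  · have := card_lt_widthX_of_forall_none_wheel_mem hX hall
    have := minVertexCover_le_card_univ (G := G)
    omega
  · obtain ⟨k, hk⟩ := not_forall.mp hall
    exact minVertexCover_lt_widthX_of_forall_none_ι_mem hX hconn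
      (forall_none_ι_mem_of_wheel_none_mem hX ((hX.2 _ _ (none_wheel_mem k)).resolve_left hk))

end LowerBound

section CoverOrder

/- Vertices of `G` outside `S` share the least rank among the vertices of `G`, so every edge
of `G`, having an end in `S`, gets oriented into `S`. -/
def coverRank (S : Finset V) : Vertex V → ℕ ×ₗ WithBot V
  | none => toLex (2 * Fintype.card V + 2, ⊥)
  | some (Sum.inr k) => toLex (k, ⊥)
  | some (Sum.inl v) => toLex (2 * Fintype.card V + 3, if v ∈ S then (v : WithBot V) else ⊥)

@[simp] theorem coverRank_none (S : Finset V) :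
    coverRank S none = toLex (2 * Fintype.card V + 2, ⊥) := rfl

@[simp] theorem coverRank_wheel (S : Finset V) (k : Fin (2 * Fintype.card V + 2)) :
    coverRank S (wheel k) = toLex ((k : ℕ), ⊥) := rfl

@[simp] theorem coverRank_ι (S : Finset V) (v : V) :
    coverRank S (ι v) =
      toLex (2 * Fintype.card V + 3, if v ∈ S then (v : WithBot V) else ⊥) := rfl

variable (G) (S : Finset V)

def coverEdges : Finset (Vertex V × Vertex V) :=
  (reductionGraph G ∪ (reductionGraph G).image Prod.swap).filter
    fun e ↦ coverRank S e.1 < coverRank S e.2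

variable {G S}

theorem mem_coverEdges {x y : Vertex V} :
    (x, y) ∈ coverEdges G S ↔
      ((x, y) ∈ reductionGraph G ∨ (y, x) ∈ reductionGraph G) ∧
        coverRank S x < coverRank S y := by
  simp [coverEdges]

theorem coverRank_ne (hS : IsVertexCover G S) {x y : Vertex V}
    (h : (x, y) ∈ reductionGraph G) : coverRank S x ≠ coverRank S y := by
  rw [mem_reductionGraph] at h
  rcases h with ⟨u, v, huv, hadj, rfl, rfl⟩ | ⟨v, rfl, rfl⟩ | ⟨k, rfl, rfl⟩ |
    ⟨j, k, hjk, rfl, rfl⟩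
  · have := hS u v hadj
    simp only [coverRank_ι, ne_eq, EmbeddingLike.apply_eq_iff_eq, Prod.mk.injEq, true_and]
    split_ifs <;> simp_all [huv.ne]
  all_goals simp <;> omega

theorem isOrientationOf_coverEdges (hS : IsVertexCover G S) :
    IsOrientationOf (coverEdges G S) (reductionGraph G) := by
  refine ⟨fun x y h ↦ (mem_coverEdges.mp h).1, fun x y h ↦ ?_⟩
  rcases (coverRank_ne hS h).lt_or_gt with hlt | hlt
  · exact .inl (mem_coverEdges.mpr ⟨.inl h, hlt⟩)
  · exact .inr (mem_coverEdges.mpr ⟨.inr h, hlt⟩)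

theorem wheel_wheel_mem_coverEdges {j k : Fin (2 * Fintype.card V + 2)}
    (h : (k : ℕ) = j + 1) : (wheel j, wheel k) ∈ coverEdges G S :=
  mem_coverEdges.mpr ⟨.inl (wheel_wheel_mem h), by simp [Prod.Lex.toLex_lt_toLex, h]⟩

theorem wheel_none_mem_coverEdges (k : Fin (2 * Fintype.card V + 2)) :
    (wheel k, none) ∈ coverEdges G S :=
  mem_coverEdges.mpr ⟨.inr (none_wheel_mem k), by simp [Prod.Lex.toLex_lt_toLex]⟩

theorem none_ι_mem_coverEdges (v : V) : (none, ι v) ∈ coverEdges G S :=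
  mem_coverEdges.mpr ⟨.inl (none_ι_mem v), by simp [Prod.Lex.toLex_lt_toLex]⟩

theorem isPath_wheel (k : Fin (2 * Fintype.card V + 2)) :
    IsPath (coverEdges G S) (wheel 0) (wheel k)
      (List.ofFn fun i : Fin (k + 1) ↦ wheel (Fin.castLE k.isLt i)) := by
  refine ⟨by simp, by simp, by simp [List.getLast?_eq_getElem?, -List.ofFn_succ], ?_,
    fun ⟨x, y⟩ he ↦ ?_⟩
  · exact List.nodup_ofFn_ofInjective (wheel_injective.comp (Fin.castLE_injective _))
  · obtain ⟨i, hi, h₁, h₂⟩ := mem_pathEdges_iff.mp he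
    simp only [List.getElem_ofFn] at h₁ h₂
    subst h₁ h₂
    exact wheel_wheel_mem_coverEdges rfl

variable (G S) in
def coverOrder : ExtractionOrder (Vertex V) where
  E := coverEdges G S
  root := wheel 0
  reach
    | none => ⟨_, isPath_pair (by simp) (wheel_none_mem_coverEdges 0)⟩
    | some (Sum.inl v) => ⟨_, isPath_triple (by simp) (by simp) (wheel_ne_ι v 0)
        (wheel_none_mem_coverEdges 0) (none_ι_mem_coverEdges v)⟩
    | some (Sum.inr k) => ⟨_, isPath_wheel k⟩
  acyclic := acyclic_of_rank fun _ _ h ↦ (mem_coverEdges.mp h).2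

theorem exists_eq_wheel_of_mem_coverEdges {x : Vertex V} {k : Fin (2 * Fintype.card V + 2)}
    (h : (x, wheel k) ∈ coverEdges G S) : ∃ j : Fin _, x = wheel j ∧ (k : ℕ) = j + 1 := by
  obtain ⟨h | h, hlt⟩ := mem_coverEdges.mp h <;> rw [mem_reductionGraph] at h <;>
    rcases h with ⟨u, v, -, -, hx, hy⟩ | ⟨v, hx, hy⟩ | ⟨j, hx, hy⟩ | ⟨j, j', hjk, hx, hy⟩ <;>
    simp_all [Prod.Lex.toLex_lt_toLex]
  omega

theorem mem_range_wheel_of_mem_coverEdges {x y : Vertex V} (h : (x, y) ∈ coverEdges G S)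
    (hy : y ∈ Set.range wheel ∨ y = none) : x ∈ Set.range wheel := by
  rcases hy with ⟨k, rfl⟩ | rfl
  · obtain ⟨j, rfl, -⟩ := exists_eq_wheel_of_mem_coverEdges h
    exact ⟨j, rfl⟩
  obtain ⟨h | h, hlt⟩ := mem_coverEdges.mp h <;> rw [mem_reductionGraph] at h <;>
    rcases h with ⟨u, v, -, -, hx, hy⟩ | ⟨v, hx, hy⟩ | ⟨j, hx, hy⟩ | ⟨j, j', hjk, hx, hy⟩ <;>
    simp_all [Prod.Lex.toLex_lt_toLex]

theorem eq_none_or_mem_range_ι_of_mem_coverEdges {x : Vertex V} {v : V}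
    (h : (x, ι v) ∈ coverEdges G S) : x = none ∨ x ∈ Set.range ι ∧ v ∈ S := by
  obtain ⟨h | h, hlt⟩ := mem_coverEdges.mp h <;> rw [mem_reductionGraph] at h <;>
    rcases h with ⟨u, v, -, -, hx, hy⟩ | ⟨v, hx, hy⟩ | ⟨j, hx, hy⟩ | ⟨j, j', hjk, hx, hy⟩ <;>
    simp_all [Prod.Lex.toLex_lt_toLex]
  all_goals split_ifs at hlt <;> simp_all

theorem not_isLabeled_coverEdges_wheel (e : Vertex V × Vertex V)
    (k : Fin (2 * Fintype.card V + 2)) : ¬ IsLabeled (coverEdges G S) e (wheel k) := by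
  rintro ⟨i, p₁, p₂, hc, -⟩
  obtain ⟨x₁, x₂, hne, h₁, h₂⟩ := hc.exists_two_inedges
  obtain ⟨j₁, rfl, hj₁⟩ := exists_eq_wheel_of_mem_coverEdges h₁
  obtain ⟨j₂, rfl, hj₂⟩ := exists_eq_wheel_of_mem_coverEdges h₂
  exact hne (congrArg wheel (Fin.ext (by omega)))

theorem fst_mem_range_wheel_of_isLabeled_none {e : Vertex V × Vertex V}
    (h : IsLabeled (coverEdges G S) e none) : e.1 ∈ Set.range wheel := by
  obtain ⟨i, p, _, hc, he⟩ := h.exists_left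
  have hp := hc.2.2.1
  refine mem_range_wheel_of_mem_coverEdges (hp.2.2.2.2 e he) ?_
  exact hp.forall_mem_of_predClosed (P := fun y ↦ y ∈ Set.range wheel ∨ y = none)
    (fun x y hxy hy ↦ .inl (mem_range_wheel_of_mem_coverEdges hxy hy)) (.inr rfl) _
    (mem_of_mem_pathEdges he).2

theorem isLabeled_coverEdges_ι {e : Vertex V × Vertex V} {s : V}
    (h : IsLabeled (coverEdges G S) e (ι s)) : s ∈ S ∧ e.1 ∉ Set.range wheel := by
  obtain ⟨i, p₁, p₂, hc, he⟩ := h.exists_left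
  obtain ⟨x₁, x₂, hne, h₁, h₂⟩ := hc.exists_two_inedges
  refine ⟨?_, fun hw ↦ ?_⟩
  · rcases eq_none_or_mem_range_ι_of_mem_coverEdges h₁ with rfl | ⟨-, hs⟩
    · rcases eq_none_or_mem_range_ι_of_mem_coverEdges h₂ with rfl | ⟨-, hs⟩
      · exact absurd rfl hne
      · exact hs
    · exact hs
  obtain ⟨-, -, hp₁, hp₂, hdisj⟩ := hc
  have hi : i ∈ Set.range wheel := by
    by_contra hi
    exact hp₁.forall_mem_of_succClosed (Q := (· ∉ Set.range wheel))
      (fun x y hxy hx hy ↦ hx (mem_range_wheel_of_mem_coverEdges hxy (.inl hy))) hi _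
      (mem_of_mem_pathEdges he).1 hw
  obtain ⟨k, rfl⟩ := hi
  have hgate : ∀ x y, (x, y) ∈ coverEdges G S → x ∉ Set.range ι → y ∈ Set.range ι →
      x = none := by
    rintro x y hxy hx ⟨v, rfl⟩
    exact (eq_none_or_mem_range_ι_of_mem_coverEdges hxy).resolve_right fun h ↦ hx h.1
  have h₁ := (hp₁.exists_path_of_gate hgate (wheel_notMem_range_ι k) ⟨s, rfl⟩).1
  have h₂ := (hp₂.exists_path_of_gate hgate (wheel_notMem_range_ι k) ⟨s, rfl⟩).1
  simpa using hdisj none h₁ h₂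

theorem isLabeled_coverEdges {e : Vertex V × Vertex V} {j : Vertex V}
    (h : IsLabeled (coverEdges G S) e j) :
    e.1 ∈ Set.range wheel ∧ j = none ∨ e.1 ∉ Set.range wheel ∧ j ∈ ι '' S := by
  rcases j with _ | s | k
  · exact .inl ⟨fst_mem_range_wheel_of_isLabeled_none h, rfl⟩
  · obtain ⟨hs, hw⟩ := isLabeled_coverEdges_ι h
    exact .inr ⟨hw, s, hs, rfl⟩
  · exact absurd h (not_isLabeled_coverEdges_wheel e k)

variable (G) in
theorem ncard_bagLabels_coverEdges_le (hS : S.Nonempty) (e : Vertex V × Vertex V) :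
    (bagLabels (coverEdges G S) e).ncard ≤ S.card := by
  have hlabel : ∀ j ∈ bagLabels (coverEdges G S) e,
      e.1 ∈ Set.range wheel ∧ j = none ∨ e.1 ∉ Set.range wheel ∧ j ∈ ι '' S := by
    rintro j ⟨e', he', hj⟩
    exact he'.fst_eq ▸ isLabeled_coverEdges hj
  by_cases hw : e.1 ∈ Set.range wheel
  · calc _ ≤ ({none} : Set (Vertex V)).ncard :=
          Set.ncard_le_ncard (fun j hj ↦ by simpa [hw] using hlabel j hj) (Set.toFinite _)
      _ ≤ S.card := by rw [Set.ncard_singleton]; exact hS.card_pos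
  · calc _ ≤ (ι '' (S : Set V)).ncard :=
          Set.ncard_le_ncard (fun j hj ↦ by simpa [hw] using hlabel j hj) (Set.toFinite _)
      _ = S.card := by rw [Set.ncard_image_of_injective _ ι_injective, Set.ncard_coe_finset]

theorem widthX_coverOrder_le (hS : S.Nonempty) : widthX (coverOrder G S) ≤ S.card + 1 := by
  have : (coverOrder G S).E.sup (fun e ↦ (bagLabels (coverOrder G S).E e).ncard) ≤ S.card :=
    Finset.sup_le fun e _ ↦ ncard_bagLabels_coverEdges_le G hS e
  unfold widthX
  omega

end CoverOrder

end ReductionGraph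

open ReductionGraph in
/-- correctness of the NP-hardness reduction from vertex cover: for every
connected graph `G` with minimum vertex cover of size at least 2, the extraction width of
the polynomial-size reduction graph equals the minimum vertex cover size plus one, so any
algorithm computing extraction orders of minimum width solves vertex cover. -/
theorem stmt7 {V : Type*} [Fintype V] [LinearOrder V] (G : SimpleGraph V)
    [DecidableRel G.Adj] (hconn : G.Connected) (h2 : 2 ≤ minVertexCover G) :
    extractionWidth (reductionGraph G) = minVertexCover G + 1 := by
  obtain ⟨S, hS, hcard⟩ := exists_isVertexCover_card_eq (G := G)
  have hX : IsOrientationOf (coverOrder G S).E (reductionGraph G) :=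
    isOrientationOf_coverEdges hS
  have hwidth : widthX (coverOrder G S) = minVertexCover G + 1 :=
    le_antisymm (hcard ▸ widthX_coverOrder_le (Finset.card_pos.mp (by omega)))
      (minVertexCover_lt_widthX hX hconn)
  rw [extractionWidth_eq hX fun Y hY ↦ hwidth ▸ minVertexCover_lt_widthX hY hconn, hwidth]
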